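/- arXiv:math/0211347 — 10 statements merged into one kernel-verified Lean document; each statement's English description precedes it below -/
import Mathlib

section
/- Let A be a unital Banach algebra, X a Banach space that is a unital A-bimodule with bounded module action, and L a closed linear subspace of X such that ax - xa ∈ L for all x ∈ L and a ∈ A. Then for every a ∈ A and x ∈ L, exp(-a)·x·exp(a) ∈ L. -/
/-!
Write `ℓ_b` and `ρ_b` for the bounded operators `x ↦ b·x` and `x ↦ x·b` on `X`. The map
`b ↦ ℓ_b` is a continuous unital homomorphism and `b ↦ ρ_b` a continuous unital
anti-homomorphism, so both commute with `exp`; and `ℓ_{-a}` commutes with `ρ_a`. Hence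
`exp(-a)·x·exp(a) = exp(ℓ_{-a}) (exp(ρ_a) x) = exp(ρ_a - ℓ_a) x`. The operator `ρ_a - ℓ_a`
maps `L` into itself, hence so do its powers and the partial sums of its exponential series,
and since `L` is closed, so does `exp(ρ_a - ℓ_a)`.
-/

open NormedSpace

section ExpMapsTo

variable {𝕜 X : Type*} [RCLike 𝕜] [NormedAddCommGroup X] [NormedSpace 𝕜 X] [CompleteSpace X]

theorem Submodule.exp_apply_mem {L : Submodule 𝕜 X} (hL : IsClosed (L : Set X))
    {T : X →L[𝕜] X} (hT : Set.MapsTo T L L) {x : X} (hx : x ∈ L) : exp T x ∈ L := by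
  have hpow : ∀ n : ℕ, (T ^ n) x ∈ L := fun n => by
    induction n with
    | zero => simpa using hx
    | succ n ih => rw [pow_succ']; exact hT ih
  have hsum : HasSum (fun n : ℕ => ((n.factorial : 𝕜))⁻¹ • (T ^ n) x) (exp T x) := by
    simpa using (exp_series_hasSum_exp' (𝕂 := 𝕜) T).mapL (ContinuousLinearMap.apply 𝕜 X x)
  exact hL.mem_of_tendsto hsum.tendsto_sum_nat
    (.of_forall fun n => L.sum_mem fun i _ => L.smul_mem _ (hpow i))

end ExpMapsTo

namespace ContinuousLinearMap

variable {𝕜 𝔸 𝔹 : Type*} [NontriviallyNormedField 𝕜] [NormedRing 𝔸] [NormedAlgebra 𝕜 𝔸]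
  [NormedAlgebra ℚ 𝔸] [CompleteSpace 𝔸] [NormedRing 𝔹] [NormedAlgebra 𝕜 𝔹] [Algebra ℚ 𝔹]

theorem map_exp_of_map_mul (φ : 𝔸 →L[𝕜] 𝔹) (h1 : φ 1 = 1)
    (hmul : ∀ a b, φ (a * b) = φ a * φ b) (a : 𝔸) : φ (exp a) = exp (φ a) :=
  map_exp (AlgHom.ofLinearMap φ.toLinearMap h1 hmul) φ.continuous a

theorem map_exp_of_map_mul_rev (φ : 𝔸 →L[𝕜] 𝔹) (h1 : φ 1 = 1)
    (hmul : ∀ a b, φ (a * b) = φ b * φ a) (a : 𝔸) : φ (exp a) = exp (φ a) := by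
  let ψ : 𝔸 →+* 𝔹ᵐᵒᵖ :=
    { toFun := fun b => MulOpposite.op (φ b)
      map_one' := by rw [h1, MulOpposite.op_one]
      map_mul' := fun b c => by rw [hmul, MulOpposite.op_mul]
      map_zero' := by rw [map_zero, MulOpposite.op_zero]
      map_add' := fun b c => by rw [map_add, MulOpposite.op_add] }
  have := map_exp ψ (MulOpposite.continuous_op.comp φ.continuous) a
  exact MulOpposite.op_injective (this.trans (exp_op _))

end ContinuousLinearMap

section Bimodule

variable {𝕜 A X : Type*} [CommSemiring 𝕜] [NormedRing A] [Module 𝕜 A]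
  [NormedAddCommGroup X] [Module 𝕜 X] {ml mr : A →ₗ[𝕜] X →ₗ[𝕜] X} {K : ℝ}

theorem norm_leftAction_le (hone : ∀ x, mr 1 x = x)
    (hbound : ∀ a b : A, ∀ x : X, ‖ml a (mr b x)‖ ≤ K * ‖a‖ * ‖x‖ * ‖b‖) (a : A) (x : X) :
    ‖ml a x‖ ≤ K * ‖(1 : A)‖ * ‖a‖ * ‖x‖ := by
  have := hbound a 1 x
  rw [hone] at this
  linarith

theorem norm_rightAction_le (hone : ∀ x, ml 1 x = x)
    (hmlr : ∀ a b : A, ∀ x : X, ml a (mr b x) = mr b (ml a x))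
    (hbound : ∀ a b : A, ∀ x : X, ‖ml a (mr b x)‖ ≤ K * ‖a‖ * ‖x‖ * ‖b‖) (b : A) (x : X) :
    ‖mr b x‖ ≤ K * ‖(1 : A)‖ * ‖b‖ * ‖x‖ := by
  have := hbound 1 b x
  rw [hmlr, hone] at this
  linarith

end Bimodule

theorem lie_subspace_exp_invariant_general
    {A X : Type*} [NormedRing A] [NormedAlgebra ℂ A] [CompleteSpace A]
    [NormedAddCommGroup X] [NormedSpace ℂ X] [CompleteSpace X]
    (ml : A →ₗ[ℂ] X →ₗ[ℂ] X) (mr : A →ₗ[ℂ] X →ₗ[ℂ] X)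
    (hml : ∀ a b : A, ∀ x : X, ml a (ml b x) = ml (a * b) x)
    (hmr : ∀ a b : A, ∀ x : X, mr b (mr a x) = mr (a * b) x)
    (hmlr : ∀ a b : A, ∀ x : X, ml a (mr b x) = mr b (ml a x))
    (hone : ∀ x : X, ml 1 x = x ∧ mr 1 x = x)
    (K : ℝ)
    (hbound : ∀ a b : A, ∀ x : X, ‖ml a (mr b x)‖ ≤ K * ‖a‖ * ‖x‖ * ‖b‖)
    (L : Submodule ℂ X) (hclosed : IsClosed (L : Set X))
    (hLie : ∀ x ∈ L, ∀ a : A, ml a x - mr a x ∈ L) :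
    ∀ a : A, ∀ x ∈ L, ml (NormedSpace.exp (-a)) (mr (NormedSpace.exp a) x) ∈ L := by
  intro a x hx
  let +nondep : NormedAlgebra ℚ A := .restrictScalars ℚ ℂ A
  let +nondep : NormedAlgebra ℚ (X →L[ℂ] X) := .restrictScalars ℚ ℂ (X →L[ℂ] X)
  let ℓ := ml.mkContinuous₂ _ (norm_leftAction_le (fun x => (hone x).2) hbound)
  let ρ := mr.mkContinuous₂ _ (norm_rightAction_le (fun x => (hone x).1) hmlr hbound)
  have hℓ : ℓ (exp (-a)) = exp (ℓ (-a)) := ℓ.map_exp_of_map_mul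
    (ContinuousLinearMap.ext fun x => (hone x).1)
    (fun b c => ContinuousLinearMap.ext fun x => (hml b c x).symm) (-a)
  have hρ : ρ (exp a) = exp (ρ a) := ρ.map_exp_of_map_mul_rev
    (ContinuousLinearMap.ext fun x => (hone x).2)
    (fun b c => ContinuousLinearMap.ext fun x => (hmr b c x).symm) a
  have hcomm : Commute (ℓ (-a)) (ρ a) := ContinuousLinearMap.ext fun y => hmlr (-a) a y
  have hconj : ml (exp (-a)) (mr (exp a) x) = exp (ρ a - ℓ a) x := by
    rw [sub_eq_neg_add, ← map_neg, exp_add_of_commute hcomm, ← hℓ, ← hρ]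
    rfl
  rw [hconj]
  refine L.exp_apply_mem hclosed (fun y hy => ?_) hx
  have hsub_apply : (ρ a - ℓ a) y = -(ml a y - mr a y) := by
    simp [ℓ, ρ]
  exact hsub_apply ▸ L.neg_mem (hLie y hy a)

/-- Let `A` be a unital Banach algebra and `X` a Banach space which is a
unital `A`-bimodule with bounded module action (encoded via the bilinear left action
`ml` and right action `mr`).  If `L` is a closed linear subspace of `X` such that
`a·x - x·a ∈ L` for all `x ∈ L`, `a ∈ A`, then `exp(-a)·x·exp(a) ∈ L` for all
`a ∈ A`, `x ∈ L`. -/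
theorem lie_subspace_exp_invariant
    {A X : Type*} [NormedRing A] [NormedAlgebra ℂ A] [CompleteSpace A]
    [NormOneClass A]
    [NormedAddCommGroup X] [NormedSpace ℂ X] [CompleteSpace X]
    (ml : A →ₗ[ℂ] X →ₗ[ℂ] X) (mr : A →ₗ[ℂ] X →ₗ[ℂ] X)
    (hml : ∀ a b : A, ∀ x : X, ml a (ml b x) = ml (a * b) x)
    (hmr : ∀ a b : A, ∀ x : X, mr b (mr a x) = mr (a * b) x)
    (hmlr : ∀ a b : A, ∀ x : X, ml a (mr b x) = mr b (ml a x))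
    (hone : ∀ x : X, ml 1 x = x ∧ mr 1 x = x)
    (K : ℝ)
    (hbound : ∀ a b : A, ∀ x : X, ‖ml a (mr b x)‖ ≤ K * ‖a‖ * ‖x‖ * ‖b‖)
    (L : Submodule ℂ X) (hclosed : IsClosed (L : Set X))
    (hLie : ∀ x ∈ L, ∀ a : A, ml a x - mr a x ∈ L) :
    ∀ a : A, ∀ x ∈ L, ml (NormedSpace.exp (-a)) (mr (NormedSpace.exp a) x) ∈ L :=
  lie_subspace_exp_invariant_general ml mr hml hmr hmlr hone K hbound L hclosed hLie
end

section
/- Let A be a unital Banach algebra and L a closed subspace of A such that b⁻¹Lb ⊆ L for every invertible b in the connected component of the identity of the group of invertibles of A. Then L is a Lie ideal: for all x ∈ L, a ∈ A, xa - ax ∈ L. -/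
/-!
Conjugating `x ∈ L` by the units `exp (t • a)`, which lie in the identity component, gives a
curve in `L` through `x` whose derivative at `t = 0` is the commutator `x * a - a * x`.
Since `L` is a closed subspace, it contains the derivative of every curve lying in it.
-/

open NormedSpace Set

theorem Submodule.deriv_mem_of_forall_mem {𝕜 F : Type*} [NontriviallyNormedField 𝕜]
    [NormedAddCommGroup F] [NormedSpace 𝕜 F] (L : Submodule 𝕜 F) (hL : IsClosed (L : Set F))
    {f : 𝕜 → F} (hf : ∀ t, f t ∈ L) (t : 𝕜) : deriv f t ∈ L := by
  have hspan : span 𝕜 (f '' univ) ≤ L := span_le.2 (by simpa [range_subset_iff] using hf)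
  exact hL.closure_subset_iff.2 hspan (range_deriv_subset_closure_span_image f dense_univ ⟨t, rfl⟩)

namespace NormedSpace

section Rat

variable {A : Type*} [NormedRing A] [NormedAlgebra ℚ A] [CompleteSpace A]

noncomputable def expUnit (x : A) : Aˣ :=
  letI := invertibleExp x
  unitOfInvertible (exp x)

@[simp]
theorem coe_expUnit (x : A) : (expUnit x : A) = exp x := rfl

@[simp]
theorem coe_expUnit_inv (x : A) : (↑(expUnit x)⁻¹ : A) = exp (-x) :=
  letI := invertibleExp x
  invOf_exp x

theorem continuous_expUnit : Continuous (expUnit : A → Aˣ) :=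
  Units.continuous_iff.2 ⟨exp_continuous, (exp_continuous.comp continuous_neg).congr fun x => (coe_expUnit_inv x).symm⟩

theorem expUnit_mem_connectedComponent_one [PreconnectedSpace A] (x : A) :
    expUnit x ∈ connectedComponent (1 : Aˣ) := by
  have hzero : expUnit (0 : A) = 1 := Units.ext exp_zero
  have himage := continuous_expUnit.image_connectedComponent_subset (0 : A)
  rw [PreconnectedSpace.connectedComponent_eq_univ, hzero] at himage
  exact himage (mem_image_of_mem _ (mem_univ x))

end Rat

theorem hasDerivAt_exp_neg_smul_mul_mul_exp_smul_zero {𝕂 A : Type*} [RCLike 𝕂] [NormedRing A]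
    [NormedAlgebra 𝕂 A] [CompleteSpace A] (a x : A) :
    HasDerivAt (fun t : 𝕂 => exp (-(t • a)) * x * exp (t • a)) (x * a - a * x) 0 := by
  have hneg : HasDerivAt (fun t : 𝕂 => exp (-(t • a))) (-a) 0 := by
    simpa [smul_neg] using hasDerivAt_exp_smul_const (-a) (0 : 𝕂)
  have hpos : HasDerivAt (fun t : 𝕂 => exp (t • a)) a 0 := by
    simpa using hasDerivAt_exp_smul_const a (0 : 𝕂)
  refine ((hneg.mul_const x).mul hpos).congr_deriv ?_
  simp only [zero_smul, neg_zero, exp_zero, mul_one, one_mul, neg_mul]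
  abel

end NormedSpace

/-- Let `A` be a unital Banach algebra and `L` a closed subspace of `A`
such that `b⁻¹ L b ⊆ L` for every invertible `b` in the connected component of the
identity of the group of invertible elements of `A`.  Then `L` is a Lie ideal:
`x * a - a * x ∈ L` for all `x ∈ L`, `a ∈ A`. -/
theorem lieIdeal_of_conj_invariant_identity_component
    {A : Type*} [NormedRing A] [NormedAlgebra ℂ A] [CompleteSpace A]
    (L : Submodule ℂ A) (hclosed : IsClosed (L : Set A))
    (hconj : ∀ b : Aˣ, b ∈ connectedComponent (1 : Aˣ) →
      ∀ x ∈ L, (↑b⁻¹ : A) * x * (b : A) ∈ L) :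
    ∀ x ∈ L, ∀ a : A, x * a - a * x ∈ L := by
  let +nondep : NormedAlgebra ℚ A := .restrictScalars ℚ ℂ A
  intro x hx a
  have hcurve : ∀ t : ℂ, exp (-(t • a)) * x * exp (t • a) ∈ L := fun t => by
    simpa using hconj (expUnit (t • a)) (expUnit_mem_connectedComponent_one _) x hx
  simpa [(hasDerivAt_exp_neg_smul_mul_mul_exp_smul_zero a x).deriv] using
    L.deriv_mem_of_forall_mem hclosed hcurve 0
end

section
/- In a unital Banach algebra A, if L is a closed subspace invariant under conjugation by every invertible element, then L is a Lie ideal: xa - ax ∈ L for all x ∈ L and a ∈ A. -/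
/-!
For `x ∈ L` and `a ∈ A`, the curve `s ↦ exp (-(s • a)) * x * exp (s • a)` lies in `L`, since
`exp (s • a)` is invertible with inverse `exp (-(s • a))`. Its derivative at `0` is `x * a - a * x`,
a limit of difference quotients of points of `L`, hence in `L` because `L` is a closed subspace.
-/

open NormedSpace Set

theorem Submodule.mem_of_hasDerivAt_of_forall_mem {𝕜 E : Type*} [NontriviallyNormedField 𝕜]
    [NormedAddCommGroup E] [NormedSpace 𝕜 E] {L : Submodule 𝕜 E} (hL : IsClosed (L : Set E))
    {f : 𝕜 → E} {f' : E} {s : 𝕜} (hf : HasDerivAt f f' s) (hfL : ∀ t, f t ∈ L) : f' ∈ L := by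
  have hspan : span 𝕜 (range f) ≤ L := span_le.2 (range_subset_iff.2 hfL)
  have hderiv := range_deriv_subset_closure_span_image f dense_univ (mem_range_self s)
  rw [hf.deriv, image_univ] at hderiv
  exact hL.closure_subset_iff.2 hspan hderiv

theorem hasDerivAt_exp_neg_smul_mul_mul_exp_smul {𝕂 A : Type*} [RCLike 𝕂] [NormedRing A]
    [NormedAlgebra 𝕂 A] [CompleteSpace A] (a x : A) :
    HasDerivAt (fun s : 𝕂 => exp (-(s • a)) * x * exp (s • a)) (x * a - a * x) 0 := by
  have hneg : HasDerivAt (fun s : 𝕂 => exp (s • -a)) (-a) 0 := by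
    simpa using hasDerivAt_exp_smul_const (-a) (0 : 𝕂)
  have hpos : HasDerivAt (fun s : 𝕂 => exp (s • a)) a 0 := by
    simpa using hasDerivAt_exp_smul_const a (0 : 𝕂)
  convert (hneg.mul_const x).mul hpos using 1
  · funext s
    simp only [Pi.mul_apply, smul_neg]
  · simp only [zero_smul, exp_zero]
    noncomm_ring

theorem exp_neg_mul_mul_exp_mem {A : Type*} [NormedRing A] [NormedAlgebra ℚ A] [CompleteSpace A]
    {S : Set A} (hS : ∀ t : Aˣ, ∀ x ∈ S, (↑t⁻¹ : A) * x * t ∈ S) (b : A) {x : A} (hx : x ∈ S) :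
    exp (-b) * x * exp b ∈ S := by
  have hinv : (↑(isUnit_exp b).unit⁻¹ : A) = exp (-b) := by
    rw [← Ring.inverse_unit, IsUnit.unit_spec, Ring.inverse_exp]
  simpa only [hinv, IsUnit.unit_spec] using hS (isUnit_exp b).unit x hx

/-- Topping: In a unital Banach algebra `A`, if `L` is a closed subspace
invariant under conjugation by every invertible element, then `L` is a Lie ideal:
`x * a - a * x ∈ L` for all `x ∈ L`, `a ∈ A`. -/
theorem lieIdeal_of_similarity_invariant
    {A : Type*} [NormedRing A] [NormedAlgebra ℂ A] [CompleteSpace A]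
    (L : Submodule ℂ A) (hclosed : IsClosed (L : Set A))
    (hconj : ∀ t : Aˣ, ∀ x ∈ L, (↑t⁻¹ : A) * x * (t : A) ∈ L) :
    ∀ x ∈ L, ∀ a : A, x * a - a * x ∈ L := by
  intro x hx a
  -- the library's group laws for `exp` are stated over `ℚ`
  let : NormedAlgebra ℚ A := NormedAlgebra.restrictScalars ℚ ℂ A
  exact L.mem_of_hasDerivAt_of_forall_mem hclosed
    (hasDerivAt_exp_neg_smul_mul_mul_exp_smul (𝕂 := ℂ) a x)
    fun s => exp_neg_mul_mul_exp_mem hconj (s • a) hx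
end

section
/- In the full matrix algebra Mₙ(ℂ), every Lie ideal (linear subspace L with [x,a] ∈ L for all x ∈ L, a ∈ Mₙ(ℂ)) is one of the following four subspaces: {0}, the scalar matrices ℂ·I, the matrices of trace zero, or all of Mₙ(ℂ). -/
/-!
Write `E k l = single k l 1`. If some `x ∈ L` has a nonzero off-diagonal entry `x l k`, then
`[[x, E k l], E k l] = -2 x l k • E k l` puts `E k l` in `L`; if it has two different diagonal
entries `x i i ≠ x j j`, then `[x, E i j]` has such an entry. Commutators with further matrix
units then give every off-diagonal `E i j` and every `E i i - E j j`, which span the trace-zero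
matrices; as these form a hyperplane, `L` is one of them or everything. Otherwise every element
of `L` is scalar, and `L` is `0` or the line of scalars.
-/

open Matrix

theorem Submodule.eq_bot_or_eq_of_le_span_singleton {K V : Type*} [DivisionRing K]
    [AddCommGroup V] [Module K V] {W : Submodule K V} {v : V} (h : W ≤ K ∙ v) :
    W = ⊥ ∨ W = K ∙ v := by
  rcases eq_or_ne v 0 with rfl | hv
  · simp_all
  · exact (nonzero_span_atom v hv).le_iff.mp h

theorem Matrix.eq_ker_trace_or_eq_top_of_ker_trace_le {K n : Type*} [Field K] [Fintype n]
    {L : Submodule K (Matrix n n K)} (h : LinearMap.ker (traceLinearMap n K K) ≤ L) :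
    L = LinearMap.ker (traceLinearMap n K K) ∨ L = ⊤ := by
  cases isEmpty_or_nonempty n
  · exact Or.inr (eq_top_iff.mpr fun x _ => by simp [Subsingleton.elim x 0])
  · exact ((LinearMap.isCoatom_ker_of_surjective trace_surjective).le_iff.mp h).symm

namespace Matrix

variable {K n : Type*} [Field K] [Fintype n] [DecidableEq n] {L : Submodule K (Matrix n n K)}

theorem single_mem_of_apply_ne_zero [NeZero (2 : K)]
    (hL : ∀ x ∈ L, ∀ a : Matrix n n K, x * a - a * x ∈ L)
    {x : Matrix n n K} (hx : x ∈ L) {k l : n} (hkl : k ≠ l) (hx' : x l k ≠ 0) :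
    single k l 1 ∈ L := by
  set e : Matrix n n K := single k l 1
  have hee : e * e = 0 := by simp [e, hkl.symm]
  have hexe : e * x * e = x l k • e := by simp [e, smul_single]
  have hbracket : (x * e - e * x) * e - e * (x * e - e * x) = (-2 * x l k) • e := by
    rw [sub_mul, mul_sub, mul_assoc x, hee, mul_zero, ← mul_assoc e e, hee, zero_mul,
      ← mul_assoc e x, hexe]
    module
  rw [← L.smul_mem_iff (by simp [hx', NeZero.ne] : -2 * x l k ≠ 0), ← hbracket]
  exact hL _ (hL x hx e) e

theorem single_mem_of_diag_ne [NeZero (2 : K)]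
    (hL : ∀ x ∈ L, ∀ a : Matrix n n K, x * a - a * x ∈ L)
    {x : Matrix n n K} (hx : x ∈ L) {i j : n} (hij : i ≠ j) (hx' : x i i ≠ x j j) :
    single j i 1 ∈ L :=
  single_mem_of_apply_ne_zero hL (hL x hx (single i j 1)) hij.symm <| by
    simpa [sub_eq_zero] using hx'

theorem single_mem_of_single_mem_sameRow
    (hL : ∀ x ∈ L, ∀ a : Matrix n n K, x * a - a * x ∈ L)
    {k l j : n} (hE : single k l 1 ∈ L) (hjk : j ≠ k) : single k j 1 ∈ L := by
  simpa [hjk] using hL _ hE (single l j 1)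

theorem single_mem_of_single_mem_sameCol
    (hL : ∀ x ∈ L, ∀ a : Matrix n n K, x * a - a * x ∈ L)
    {k l i : n} (hE : single k l 1 ∈ L) (hil : i ≠ l) : single i l 1 ∈ L := by
  simpa [hil.symm] using L.neg_mem (hL _ hE (single i k 1))

theorem single_mem_of_single_mem [NeZero (2 : K)]
    (hL : ∀ x ∈ L, ∀ a : Matrix n n K, x * a - a * x ∈ L)
    {k l : n} (hkl : k ≠ l) (hE : single k l 1 ∈ L) {i j : n} (hij : i ≠ j) :
    single i j 1 ∈ L := by
  rcases ne_or_eq j k with hjk | rfl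
  · exact single_mem_of_single_mem_sameCol hL (single_mem_of_single_mem_sameRow hL hE hjk) hij
  rcases ne_or_eq i l with hil | rfl
  · exact single_mem_of_single_mem_sameRow hL (single_mem_of_single_mem_sameCol hL hE hil)
      hij.symm
  · exact single_mem_of_apply_ne_zero hL hE hkl.symm (by simp)

theorem single_sub_single_mem
    (hL : ∀ x ∈ L, ∀ a : Matrix n n K, x * a - a * x ∈ L)
    (hsingle : ∀ i j : n, i ≠ j → single i j 1 ∈ L) (i j : n) :
    single i i 1 - single j j 1 ∈ L := by
  rcases eq_or_ne i j with rfl | hij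
  · simp
  · simpa using hL _ (hsingle i j hij) (single j i 1)

theorem ker_trace_le
    (hL : ∀ x ∈ L, ∀ a : Matrix n n K, x * a - a * x ∈ L)
    (hsingle : ∀ i j : n, i ≠ j → single i j 1 ∈ L) :
    LinearMap.ker (traceLinearMap n K K) ≤ L := by
  intro x hx
  rw [LinearMap.mem_ker, traceLinearMap_apply] at hx
  cases isEmpty_or_nonempty n
  · simp [Subsingleton.elim x 0]
  obtain ⟨b⟩ := ‹Nonempty n›
  -- the diagonal of `x` is moved onto `single b b`, where it adds up to `trace x = 0`
  have hsum : ∑ i, ∑ j, (single i j (x i j) - if i = j then x i i • single b b 1 else 0) = x := by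
    simp only [Finset.sum_sub_distrib, Finset.sum_ite_eq, Finset.mem_univ, if_true,
      ← Finset.sum_smul, ← matrix_eq_sum_single]
    rw [show ∑ i, x i i = 0 from hx, zero_smul, sub_zero]
  rw [← hsum]
  refine L.sum_mem fun i _ => L.sum_mem fun j _ => ?_
  have hs : ∀ (i j : n) (c : K), single i j c = c • single i j 1 := by simp [smul_single]
  rcases eq_or_ne i j with rfl | hij
  · rw [if_pos rfl, hs, ← smul_sub]
    exact L.smul_mem _ (single_sub_single_mem hL hsingle i b)
  · rw [if_neg hij, sub_zero, hs]
    exact L.smul_mem _ (hsingle i j hij)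

theorem le_span_one_of_forall_single_notMem [NeZero (2 : K)]
    (hL : ∀ x ∈ L, ∀ a : Matrix n n K, x * a - a * x ∈ L)
    (hsingle : ∀ i j : n, i ≠ j → single i j 1 ∉ L) :
    L ≤ K ∙ (1 : Matrix n n K) := by
  intro x hx
  rw [Submodule.mem_span_singleton]
  cases isEmpty_or_nonempty n
  · exact ⟨0, Subsingleton.elim _ _⟩
  obtain ⟨b⟩ := ‹Nonempty n›
  refine ⟨x b b, Matrix.ext fun i j => ?_⟩
  rcases eq_or_ne i j with rfl | hij
  · rcases eq_or_ne i b with rfl | hib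
    · simp
    · by_contra hne
      exact hsingle b i hib.symm
        (single_mem_of_diag_ne hL hx hib (by simpa using Ne.symm hne))
  · by_contra hne
    exact hsingle j i hij.symm
      (single_mem_of_apply_ne_zero hL hx hij.symm (by simpa [hij] using Ne.symm hne))

end Matrix

/-- Every Lie ideal of the full matrix algebra `Mₙ(ℂ)` (a linear subspace
`L` with `x*a - a*x ∈ L` for all `x ∈ L`, `a`) is one of: `{0}`, the scalar matrices,
the trace-zero matrices, or all of `Mₙ(ℂ)`. -/
theorem lie_ideal_matrix_classification
    {n : ℕ} (L : Submodule ℂ (Matrix (Fin n) (Fin n) ℂ))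
    (hLie : ∀ x ∈ L, ∀ a : Matrix (Fin n) (Fin n) ℂ, x * a - a * x ∈ L) :
    L = ⊥ ∨
    L = Submodule.span ℂ {(1 : Matrix (Fin n) (Fin n) ℂ)} ∨
    L = LinearMap.ker (Matrix.traceLinearMap (Fin n) ℂ ℂ) ∨
    L = ⊤ := by
  by_cases h : ∃ i j : Fin n, i ≠ j ∧ single i j 1 ∈ L
  · obtain ⟨i, j, hij, hE⟩ := h
    exact Or.inr <| Or.inr <| eq_ker_trace_or_eq_top_of_ker_trace_le <|
      ker_trace_le hLie fun _ _ => single_mem_of_single_mem hLie hij hE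
  · simp only [not_exists, not_and] at h
    exact (Submodule.eq_bot_or_eq_of_le_span_singleton
      (le_span_one_of_forall_single_notMem hLie h)).imp_right Or.inl
end

section
/- Let Tₙ be the algebra of upper triangular n×n complex matrices and Dₙ the diagonal matrices. If L is a Lie ideal in Tₙ and K = L ∩ Sₙ where Sₙ is the strictly upper triangular matrices, then K is a two-sided associative ideal of Tₙ. -/
/-!
For a diagonal matrix unit `e = Eₖₖ` and `x ∈ L ∩ Sₙ` we have `e x e = 0`, so the double bracket
`[[x, e], e] = x e + e x` lies in `L` along with `[x, e] = x e - e x`; halving gives `e x, x e ∈ L`.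
For `i < j` one bracket more does it: `[[x, Eᵢⱼ], Eᵢᵢ] = Eᵢⱼ x` and `[[x, Eᵢⱼ], Eⱼⱼ] = x Eᵢⱼ`.
Since the `Eᵢⱼ` with `i ≤ j` span `Tₙ`, this makes `L ∩ Sₙ` an ideal of `Tₙ`.
-/

open Matrix

theorem Submodule.mul_mem_and_mem_mul_of_isIdempotentElem {R A : Type*} [Ring R]
    [Invertible (2 : R)] [Ring A] [Module R A] (L : Submodule R A) {e x : A}
    (he : IsIdempotentElem e) (hL : ∀ y ∈ L, y * e - e * y ∈ L) (hx : x ∈ L)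
    (hexe : e * x * e = 0) : e * x ∈ L ∧ x * e ∈ L := by
  have hdiff : x * e - e * x ∈ L := hL x hx
  have hsum : x * e + e * x ∈ L := by
    have hdouble := hL _ hdiff
    have hexp : (x * e - e * x) * e - e * (x * e - e * x)
        = x * (e * e) + (e * e) * x - (e * x * e + e * x * e) := by noncomm_ring
    rwa [hexp, he.eq, hexe, add_zero, sub_zero] at hdouble
  have halve {z : A} (hz : (2 : R) • z ∈ L) : z ∈ L :=
    (L.smul_mem_iff_of_isUnit (isUnit_of_invertible 2)).mp hz
  constructor
  · refine halve ?_
    convert sub_mem hsum hdiff using 1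
    rw [two_smul]; abel
  · refine halve ?_
    convert add_mem hsum hdiff using 1
    rw [two_smul]; abel

namespace Matrix

variable {ι R : Type*}

def IsStrictUpperTriangular [LE ι] [Zero R] (M : Matrix ι ι R) : Prop :=
  ∀ i j, j ≤ i → M i j = 0

section LinearOrder

variable [LinearOrder ι]

theorem isUpperTriangular_single [Zero R] {i j : ι} (hij : i ≤ j) (c : R) :
    (single i j c).IsUpperTriangular := by
  rintro p q hqp
  apply single_apply_of_ne
  rintro ⟨rfl, rfl⟩
  exact hqp.not_ge hij

variable [Fintype ι]

theorem IsUpperTriangular.mul_isStrictUpperTriangular [NonUnitalNonAssocSemiring R]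
    {a x : Matrix ι ι R} (ha : a.IsUpperTriangular) (hx : x.IsStrictUpperTriangular) :
    (a * x).IsStrictUpperTriangular := by
  intro i j hji
  rw [mul_apply]
  refine Finset.sum_eq_zero fun k _ => ?_
  rcases lt_or_ge k i with hki | hik
  · rw [ha hki, zero_mul]
  · rw [hx k j (hji.trans hik), mul_zero]

theorem IsStrictUpperTriangular.mul_isUpperTriangular [NonUnitalNonAssocSemiring R]
    {x a : Matrix ι ι R} (hx : x.IsStrictUpperTriangular) (ha : a.IsUpperTriangular) :
    (x * a).IsStrictUpperTriangular := by
  intro i j hji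
  rw [mul_apply]
  refine Finset.sum_eq_zero fun k _ => ?_
  rcases le_or_gt k i with hki | hik
  · rw [hx i k hki, zero_mul]
  · rw [ha (hji.trans_lt hik), mul_zero]

theorem IsUpperTriangular.mem_of_forall_single_mem [Semiring R] {M : Submodule R (Matrix ι ι R)}
    {a : Matrix ι ι R} (ha : a.IsUpperTriangular)
    (hM : ∀ i j, i ≤ j → single i j (1 : R) ∈ M) : a ∈ M := by
  rw [matrix_eq_sum_single a]
  refine M.sum_mem fun i _ => M.sum_mem fun j _ => ?_
  rcases lt_or_ge j i with hji | hij
  · rw [ha hji, single_zero]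
    exact M.zero_mem
  · rw [← mul_one (a i j), ← smul_eq_mul, ← smul_single]
    exact M.smul_mem _ (hM i j hij)

section LieIdeal

variable [CommRing R] {L : Submodule R (Matrix ι ι R)}
  (hLie : ∀ x ∈ L, ∀ a : Matrix ι ι R, a.IsUpperTriangular → x * a - a * x ∈ L)
  {x : Matrix ι ι R} (hxL : x ∈ L) (hx : x.IsStrictUpperTriangular)
include hLie hxL hx

theorem single_mul_mem_and_mem_mul_single_of_lt {i j : ι} (hij : i < j) :
    single i j (1 : R) * x ∈ L ∧ x * single i j (1 : R) ∈ L := by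
  set E := single i j (1 : R)
  have hbracket : x * E - E * x ∈ L := hLie x hxL E (isUpperTriangular_single hij.le 1)
  have hexpand (P : Matrix ι ι R) :
      (x * E - E * x) * P - P * (x * E - E * x) = x * (E * P) - E * x * P - P * x * E + P * E * x :=
    by noncomm_ring
  constructor
  · have hmem := hLie _ hbracket _ (isUpperTriangular_single (le_refl i) 1)
    rw [hexpand] at hmem
    simpa [E, hij.ne', hx i i le_rfl, hx j i hij.le] using hmem
  · have hmem := hLie _ hbracket _ (isUpperTriangular_single (le_refl j) 1)
    rw [hexpand] at hmem
    simpa [E, hij.ne, hij.ne', hx j j le_rfl, hx j i hij.le] using hmem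

variable [Invertible (2 : R)]

theorem single_same_mul_mem_and_mem_mul_single_same (k : ι) :
    single k k (1 : R) * x ∈ L ∧ x * single k k (1 : R) ∈ L :=
  L.mul_mem_and_mem_mul_of_isIdempotentElem (by simp [IsIdempotentElem])
    (fun y hy => hLie y hy _ (isUpperTriangular_single le_rfl 1)) hxL
    (by simp [hx k k le_rfl])

theorem single_mul_mem_and_mem_mul_single {i j : ι} (hij : i ≤ j) :
    single i j (1 : R) * x ∈ L ∧ x * single i j (1 : R) ∈ L := by
  rcases hij.eq_or_lt with rfl | hlt
  · exact single_same_mul_mem_and_mem_mul_single_same hLie hxL hx i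
  · exact single_mul_mem_and_mem_mul_single_of_lt hLie hxL hx hlt

theorem mul_mem_and_mem_mul_of_isUpperTriangular {a : Matrix ι ι R} (ha : a.IsUpperTriangular) :
    a * x ∈ L ∧ x * a ∈ L :=
  ⟨ha.mem_of_forall_single_mem (M := L.comap (LinearMap.mulRight R x)) fun _ _ hij =>
      (single_mul_mem_and_mem_mul_single hLie hxL hx hij).1,
    ha.mem_of_forall_single_mem (M := L.comap (LinearMap.mulLeft R x)) fun _ _ hij =>
      (single_mul_mem_and_mem_mul_single hLie hxL hx hij).2⟩

end LieIdeal

end LinearOrder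

end Matrix

theorem offDiagonal_part_of_lie_ideal_is_ideal_general
    {n : ℕ} (L : Submodule ℂ (Matrix (Fin n) (Fin n) ℂ))
    (hLie : ∀ x ∈ L, ∀ a : Matrix (Fin n) (Fin n) ℂ,
      (∀ i j : Fin n, j < i → a i j = 0) → x * a - a * x ∈ L) :
    ∀ x ∈ L, (∀ i j : Fin n, j ≤ i → x i j = 0) →
      ∀ a : Matrix (Fin n) (Fin n) ℂ, (∀ i j : Fin n, j < i → a i j = 0) →
        (a * x ∈ L ∧ (∀ i j : Fin n, j ≤ i → (a * x) i j = 0)) ∧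
        (x * a ∈ L ∧ (∀ i j : Fin n, j ≤ i → (x * a) i j = 0)) := by
  intro x hxL hx a ha
  have hmem := mul_mem_and_mem_mul_of_isUpperTriangular hLie hxL hx ha
  exact ⟨⟨hmem.1, IsUpperTriangular.mul_isStrictUpperTriangular ha hx⟩,
    hmem.2, IsStrictUpperTriangular.mul_isUpperTriangular hx ha⟩

/-- Let `Tₙ` be the upper triangular `n × n` complex matrices and `Sₙ` the
strictly upper triangular ones.  If `L` is a Lie ideal in `Tₙ` and `K = L ∩ Sₙ`, then
`K` is a two-sided associative ideal of `Tₙ`: it is closed under left and right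
multiplication by elements of `Tₙ` (staying inside `L ∩ Sₙ`). -/
theorem offDiagonal_part_of_lie_ideal_is_ideal
    {n : ℕ} (L : Submodule ℂ (Matrix (Fin n) (Fin n) ℂ))
    (hLsub : ∀ x ∈ L, ∀ i j : Fin n, j < i → x i j = 0)
    (hLie : ∀ x ∈ L, ∀ a : Matrix (Fin n) (Fin n) ℂ,
      (∀ i j : Fin n, j < i → a i j = 0) → x * a - a * x ∈ L) :
    ∀ x ∈ L, (∀ i j : Fin n, j ≤ i → x i j = 0) →
      ∀ a : Matrix (Fin n) (Fin n) ℂ, (∀ i j : Fin n, j < i → a i j = 0) →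
        (a * x ∈ L ∧ (∀ i j : Fin n, j ≤ i → (a * x) i j = 0)) ∧
        (x * a ∈ L ∧ (∀ i j : Fin n, j ≤ i → (x * a) i j = 0)) :=
  offDiagonal_part_of_lie_ideal_is_ideal_general L hLie
end

section
/- Let L be a Lie ideal in the upper triangular matrix algebra Tₙ, and let π : Tₙ → Dₙ be the projection onto the diagonal (π(x) has the same diagonal entries as x and zeros elsewhere). Then for every x ∈ L, both π(x) ∈ L and x - π(x) ∈ L; consequently L = (L ∩ Dₙ) + (L ∩ Sₙ). -/
/-- Let `L` be a Lie ideal in the algebra `Tₙ` of upper triangular `n × n`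
complex matrices, and let `π(x)` be the diagonal part of `x`.  Then for every `x ∈ L`,
both `π(x) ∈ L` and `x - π(x) ∈ L`; consequently every `x ∈ L` is the sum of a diagonal
element of `L` and a strictly upper triangular element of `L`
(i.e. `L = (L ∩ Dₙ) + (L ∩ Sₙ)`). -/
theorem lie_ideal_diagonal_decomposition
    {n : ℕ} (L : Submodule ℂ (Matrix (Fin n) (Fin n) ℂ))
    (hLsub : ∀ x ∈ L, ∀ i j : Fin n, j < i → x i j = 0)
    (hLie : ∀ x ∈ L, ∀ a : Matrix (Fin n) (Fin n) ℂ,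
      (∀ i j : Fin n, j < i → a i j = 0) → x * a - a * x ∈ L) :
    ∀ x ∈ L,
      Matrix.diagonal (fun i => x i i) ∈ L ∧
      x - Matrix.diagonal (fun i => x i i) ∈ L ∧
      ∃ d ∈ L, ∃ s ∈ L, d.IsDiag ∧ (∀ i j : Fin n, j ≤ i → s i j = 0) ∧ x = d + s := by
  intro x hx
  set N : Matrix (Fin n) (Fin n) ℂ := Matrix.diagonal (fun i => ((i : ℕ) : ℂ)) with hN
  have hNut : ∀ i j : Fin n, j < i → N i j = 0 := by
    intro i j hji
    exact Matrix.diagonal_apply_ne _ (fun h => absurd (Fin.val_eq_of_eq h) (by omega))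
  have key : ∀ m : ℕ, ∃ y ∈ L, (∀ i, y i i = x i i) ∧
      (∀ i j : Fin n, i < j → (j : ℕ) ≤ (i : ℕ) + m → y i j = 0) := by
    intro m
    induction m with
    | zero => exact ⟨x, hx, fun i => rfl, fun i j hij hle => absurd hle (by omega)⟩
    | succ m ih =>
      obtain ⟨y, hyL, hdiag, hz⟩ := ih
      have hentry : ∀ i j : Fin n,
          (y * N - N * y) i j = (((j : ℕ) : ℂ) - ((i : ℕ) : ℂ)) * y i j := by
        intro i j
        simp [hN, Matrix.sub_apply, Matrix.mul_diagonal, Matrix.diagonal_mul]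
        ring
      refine ⟨y - (((m : ℕ) + 1 : ℂ))⁻¹ • (y * N - N * y), ?_, ?_, ?_⟩
      · exact L.sub_mem hyL (L.smul_mem _ (hLie y hyL N hNut))
      · intro i
        simp [Matrix.sub_apply, Matrix.smul_apply, hentry i i, hdiag i]
      · intro i j hij hle
        have hm1 : ((m : ℕ) + 1 : ℂ) ≠ 0 := by
          exact Nat.cast_add_one_ne_zero m
        simp only [Matrix.sub_apply, Matrix.smul_apply, hentry i j, smul_eq_mul]
        rcases Nat.lt_or_ge (j : ℕ) ((i : ℕ) + (m + 1)) with h | h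
        · rw [hz i j hij (by omega)]; ring
        · have hj : (j : ℕ) = (i : ℕ) + (m + 1) := by omega
          have hc : ((j : ℕ) : ℂ) - ((i : ℕ) : ℂ) = ((m : ℕ) + 1 : ℂ) := by
            rw [hj]; push_cast; ring
          rw [hc, inv_mul_cancel_left₀ hm1, sub_self]
  obtain ⟨y, hyL, hdiag, hz⟩ := key n
  have hy_eq : y = Matrix.diagonal (fun i => x i i) := by
    ext i j
    rcases eq_or_ne i j with rfl | hne
    · simp [Matrix.diagonal_apply_eq, hdiag i]
    · rw [Matrix.diagonal_apply_ne _ hne]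
      rcases lt_or_gt_of_ne hne with h | h
      · exact hz i j h (by omega)
      · exact hLsub y hyL i j h
  rw [hy_eq] at hyL
  refine ⟨hyL, L.sub_mem hx hyL, Matrix.diagonal (fun i => x i i), hyL,
    x - Matrix.diagonal (fun i => x i i), L.sub_mem hx hyL, Matrix.isDiag_diagonal _,
    ?_, by abel⟩
  intro i j hji
  rcases eq_or_ne j i with rfl | hne
  · simp [Matrix.sub_apply, Matrix.diagonal_apply_eq]
  · have hji' : j < i := lt_of_le_of_ne hji hne
    rw [Matrix.sub_apply, hLsub x hx i j hji',
      Matrix.diagonal_apply_ne _ (fun h => hne h.symm), sub_zero]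
end

section
/- Let K be a two-sided ideal of the upper triangular matrix algebra Tₙ with K ∩ Dₙ = {0}, and let E = {d ∈ Dₙ : d_{ii} = d_{jj} whenever i < j and the matrix unit e_{ij} ∉ K}. Then for any subspace F ⊆ E, the subspace F + K is a Lie ideal of Tₙ. -/
/-! For upper triangular `a` and `k ∈ K`, both `k * a` and `a * k` lie in the two-sided ideal `K`.
For a diagonal `f`, the `(i, j)` entry of `f * a - a * f` is `(f i i - f j j) * a i j`: it vanishes
on and below the diagonal, and above it whenever `e_ij ∉ K` by the defining property of `E`.
So `f * a - a * f` is a combination of matrix units lying in `K`. -/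

namespace Matrix

theorem IsDiag.mul_sub_mul_apply {ι R : Type*} [Fintype ι] [DecidableEq ι] [CommRing R]
    {d : Matrix ι ι R} (hd : d.IsDiag) (a : Matrix ι ι R) (i j : ι) :
    (d * a - a * d) i j = (d i i - d j j) * a i j := by
  rw [sub_apply, mul_apply, mul_apply, Finset.sum_eq_single i, Finset.sum_eq_single j]
  · ring
  · exact fun k _ hk => by rw [hd hk, mul_zero]
  · exact fun h => absurd (Finset.mem_univ j) h
  · exact fun k _ hk => by rw [hd (Ne.symm hk), zero_mul]
  · exact fun h => absurd (Finset.mem_univ i) h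

theorem mem_of_single_one_mem {m n R : Type*} [Fintype m] [Fintype n] [DecidableEq m]
    [DecidableEq n] [Semiring R] {K : Submodule R (Matrix m n R)} {x : Matrix m n R}
    (h : ∀ i j, x i j ≠ 0 → single i j (1 : R) ∈ K) : x ∈ K := by
  rw [matrix_eq_sum_single x]
  refine K.sum_mem fun i _ => K.sum_mem fun j _ => ?_
  by_cases hx : x i j = 0
  · rw [hx, single_zero]
    exact K.zero_mem
  · simpa only [smul_single, smul_eq_mul, mul_one] using K.smul_mem (x i j) (h i j hx)

theorem IsDiag.mul_sub_mul_mem {ι R : Type*} [Fintype ι] [DecidableEq ι] [LinearOrder ι]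
    [CommRing R] {K : Submodule R (Matrix ι ι R)} {d : Matrix ι ι R} (hd : d.IsDiag)
    (hdK : ∀ i j, i < j → single i j (1 : R) ∉ K → d i i = d j j)
    {a : Matrix ι ι R} (ha : a.BlockTriangular id) : d * a - a * d ∈ K := by
  refine mem_of_single_one_mem fun i j hij => ?_
  rw [hd.mul_sub_mul_apply] at hij
  rcases lt_trichotomy i j with hlt | rfl | hgt
  · by_contra hK
    exact hij (by rw [hdK i j hlt hK, sub_self, zero_mul])
  · exact absurd (by rw [sub_self, zero_mul]) hij
  · exact absurd (by rw [ha hgt, mul_zero]) hij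

end Matrix

theorem addend_plus_ideal_is_lie_ideal_general
    {n : ℕ} (K : Submodule ℂ (Matrix (Fin n) (Fin n) ℂ))
    (hKl : ∀ a : Matrix (Fin n) (Fin n) ℂ, (∀ i j : Fin n, j < i → a i j = 0) →
      ∀ x ∈ K, a * x ∈ K)
    (hKr : ∀ a : Matrix (Fin n) (Fin n) ℂ, (∀ i j : Fin n, j < i → a i j = 0) →
      ∀ x ∈ K, x * a ∈ K)
    (F : Submodule ℂ (Matrix (Fin n) (Fin n) ℂ))
    (hF : ∀ f ∈ F, f.IsDiag ∧
      ∀ i j : Fin n, i < j → Matrix.single i j (1 : ℂ) ∉ K → f i i = f j j) :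
    ∀ x ∈ F ⊔ K, ∀ a : Matrix (Fin n) (Fin n) ℂ,
      (∀ i j : Fin n, j < i → a i j = 0) → x * a - a * x ∈ F ⊔ K := by
  intro x hx a ha
  obtain ⟨f, hf, k, hk, rfl⟩ := Submodule.mem_sup.mp hx
  have hfa : f * a - a * f ∈ K :=
    (hF f hf).1.mul_sub_mul_mem (hF f hf).2 fun i j hji => ha i j hji
  have hka : k * a - a * k ∈ K := K.sub_mem (hKr a ha k hk) (hKl a ha k hk)
  have hsplit : (f + k) * a - a * (f + k) = (f * a - a * f) + (k * a - a * k) := by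
    noncomm_ring
  rw [hsplit]
  exact Submodule.mem_sup_right (K.add_mem hfa hka)

/-- Let `K` be a two-sided ideal of the upper triangular matrix algebra
`Tₙ` with `K ∩ Dₙ = {0}`, and let
`E = {d diagonal : d ᵢᵢ = d ⱼⱼ whenever i < j and e₍ᵢⱼ₎ ∉ K}`.  Then for any subspace
`F ⊆ E`, the subspace `F + K` is a Lie ideal of `Tₙ`. -/
theorem addend_plus_ideal_is_lie_ideal
    {n : ℕ} (K : Submodule ℂ (Matrix (Fin n) (Fin n) ℂ))
    (hKsub : ∀ x ∈ K, ∀ i j : Fin n, j < i → x i j = 0)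
    (hKl : ∀ a : Matrix (Fin n) (Fin n) ℂ, (∀ i j : Fin n, j < i → a i j = 0) →
      ∀ x ∈ K, a * x ∈ K)
    (hKr : ∀ a : Matrix (Fin n) (Fin n) ℂ, (∀ i j : Fin n, j < i → a i j = 0) →
      ∀ x ∈ K, x * a ∈ K)
    (hKD : ∀ x ∈ K, x.IsDiag → x = 0)
    (F : Submodule ℂ (Matrix (Fin n) (Fin n) ℂ))
    (hF : ∀ f ∈ F, f.IsDiag ∧
      ∀ i j : Fin n, i < j → Matrix.single i j (1 : ℂ) ∉ K → f i i = f j j) :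
    ∀ x ∈ F ⊔ K, ∀ a : Matrix (Fin n) (Fin n) ℂ,
      (∀ i j : Fin n, j < i → a i j = 0) → x * a - a * x ∈ F ⊔ K :=
  addend_plus_ideal_is_lie_ideal_general K hKl hKr F hF
end

section
/- Let L be a Lie ideal in the upper triangular matrix algebra Tₙ, let K = L ∩ Sₙ (strictly upper triangular part), and let f ∈ L ∩ Dₙ. If i < j and e_{ij} ∉ K but e_{ij} ∈ Tₙ has position (i,j) in the upper triangle, then f_{ii} = f_{jj}. -/
/-! For diagonal `f` the commutator `f e₍ᵢⱼ₎ - e₍ᵢⱼ₎ f` equals `(fᵢᵢ - fⱼⱼ) e₍ᵢⱼ₎`, and it lies in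
the Lie ideal `L`. So if `fᵢᵢ ≠ fⱼⱼ` then `e₍ᵢⱼ₎ ∈ L`, and being strictly upper triangular for
`i < j` it would lie in `K`. -/

namespace Matrix

section Commutator

variable {n R : Type*} [Fintype n] [DecidableEq n] [CommRing R]

theorem diagonal_mul_single_sub_single_mul_diagonal (d : n → R) (i j : n) (c : R) :
    diagonal d * single i j c - single i j c * diagonal d = (d i - d j) • single i j c := by
  ext p q
  simp only [sub_apply, smul_apply, diagonal_mul, mul_diagonal, single_apply, smul_eq_mul]
  split_ifs with h
  · obtain ⟨rfl, rfl⟩ := h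
    ring
  · simp

theorem IsDiag.mul_single_sub_single_mul {f : Matrix n n R} (hf : f.IsDiag) (i j : n) (c : R) :
    f * single i j c - single i j c * f = (f i i - f j j) • single i j c := by
  conv_lhs => rw [← hf.diagonal_diag]
  exact diagonal_mul_single_sub_single_mul_diagonal _ i j c

end Commutator

theorem single_apply_eq_zero_of_le {n R : Type*} [LinearOrder n] [Zero R] {i j : n}
    (hij : i < j) (c : R) {p q : n} (hqp : q ≤ p) : single i j c p q = 0 := by
  apply single_apply_of_ne
  rintro ⟨rfl, rfl⟩
  exact hqp.not_gt hij

end Matrix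

theorem diagonal_part_constraint_general
    {n : ℕ} (L : Submodule ℂ (Matrix (Fin n) (Fin n) ℂ))
    (hLie : ∀ x ∈ L, ∀ a : Matrix (Fin n) (Fin n) ℂ,
      (∀ i j : Fin n, j < i → a i j = 0) → x * a - a * x ∈ L)
    (f : Matrix (Fin n) (Fin n) ℂ) (hfL : f ∈ L) (hfD : f.IsDiag)
    (i j : Fin n) (hij : i < j)
    (hij' : ¬ (Matrix.single i j (1 : ℂ) ∈ L ∧
      (∀ p q : Fin n, q ≤ p → Matrix.single i j (1 : ℂ) p q = 0))) :
    f i i = f j j := by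
  have hstrict : ∀ p q : Fin n, q ≤ p → Matrix.single i j (1 : ℂ) p q = 0 :=
    fun _ _ => Matrix.single_apply_eq_zero_of_le hij 1
  by_contra hne
  have hcomm : (f i i - f j j) • Matrix.single i j (1 : ℂ) ∈ L :=
    hfD.mul_single_sub_single_mul i j 1 ▸ hLie f hfL _ fun p q hqp => hstrict p q hqp.le
  exact hij' ⟨(Submodule.smul_mem_iff L (sub_ne_zero.2 hne)).1 hcomm, hstrict⟩

/-- Let `L` be a Lie ideal in the upper triangular matrix algebra `Tₙ`,
`K = L ∩ Sₙ` its strictly upper triangular part, and `f ∈ L ∩ Dₙ` a diagonal element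
of `L`.  If `i < j` and the matrix unit `e₍ᵢⱼ₎ ∉ K`, then `f ᵢᵢ = f ⱼⱼ`. -/
theorem diagonal_part_constraint
    {n : ℕ} (L : Submodule ℂ (Matrix (Fin n) (Fin n) ℂ))
    (hLsub : ∀ x ∈ L, ∀ i j : Fin n, j < i → x i j = 0)
    (hLie : ∀ x ∈ L, ∀ a : Matrix (Fin n) (Fin n) ℂ,
      (∀ i j : Fin n, j < i → a i j = 0) → x * a - a * x ∈ L)
    (f : Matrix (Fin n) (Fin n) ℂ) (hfL : f ∈ L) (hfD : f.IsDiag)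
    (i j : Fin n) (hij : i < j)
    (hij' : ¬ (Matrix.single i j (1 : ℂ) ∈ L ∧
      (∀ p q : Fin n, q ≤ p → Matrix.single i j (1 : ℂ) p q = 0))) :
    f i i = f j j :=
  diagonal_part_constraint_general L hLie f hfL hfD i j hij hij'
end

section
/- Let L be a Lie ideal in the upper triangular matrix algebra Tₙ. Then L is similarity invariant: for every invertible t ∈ Tₙ and x ∈ L, t⁻¹xt ∈ L. -/
/-!
Write `t = d (1 + N)` with `d` the diagonal of `t` and `N` strictly upper triangular, and factor
`1 + N` into transvections `1 + c E_ij` with `i < j`. Conjugation by `d` multiplies each entry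
`x_ij` by `d_j / d_i`, which keeps `x` in `L` because every off-diagonal entry is already there:
`x_ij E_ij = -[[x, E_ii], E_jj]`. For a transvection, `w = c E_ij` satisfies `w² = 0` and
`w x w = 0`, so `(1 - w) x (1 + w) = x + [x, w] ∈ L`.
-/

section Ring

variable {A S : Type*} [Ring A] [SetLike S A]

/-- `u⁻¹ L u ⊆ L`, phrased through left inverses so that no inverse has to be chosen. -/
def ConjInvariant (L : S) (u : A) : Prop :=
  ∀ v, v * u = 1 → ∀ x ∈ L, v * x * u ∈ L

theorem ConjInvariant.mul {L : S} {a b : A} (ha : IsUnit a) (hca : ConjInvariant L a)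
    (hcb : ConjInvariant L b) : ConjInvariant L (a * b) := by
  obtain ⟨a, rfl⟩ := ha
  intro v hv x hx
  have hxab : v * x * (a * b) = v * a * (↑a⁻¹ * x * a) * b := by
    simp only [mul_assoc, Units.mul_inv_cancel_left]
  rw [hxab]
  exact hcb _ (by rw [mul_assoc, hv]) _ (hca _ a.inv_mul _ hx)

theorem conjInvariant_one_add_of_mul_self_eq_zero [AddSubgroupClass S A] {L : S} {w : A}
    (hw : w * w = 0) (hwxw : ∀ x ∈ L, w * x * w = 0) (hL : ∀ x ∈ L, x * w - w * x ∈ L) :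
    ConjInvariant L (1 + w) := by
  intro v hv x hx
  obtain rfl : v = 1 - w := by
    calc v = v * (1 + w) * (1 - w) + v * (w * w) := by noncomm_ring
      _ = 1 - w := by rw [hv, hw]; noncomm_ring
  have hconj : (1 - w) * x * (1 + w) = x + (x * w - w * x) - w * x * w := by noncomm_ring
  rw [hconj, hwxw x hx, sub_zero]
  exact add_mem hx (hL x hx)

end Ring

namespace Matrix

section Ring

variable {ι R : Type*} [Fintype ι] [DecidableEq ι] [Ring R]

theorem one_add_eq_mul_one_add_single {N : Matrix ι ι R} {i j : ι} (hij : i ≠ j)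
    (hrow : ∀ b, N j b = 0) :
    1 + N = (1 + single i j (N i j)) * (1 + (N - single i j (N i j))) := by
  have hN : single i j (N i j) * N = 0 := by
    ext a b
    rcases eq_or_ne a i with rfl | ha
    · rw [single_mul_apply_same, hrow, mul_zero, zero_apply]
    · rw [single_mul_apply_of_ne _ _ _ _ _ ha, zero_apply]
  rw [add_mul, one_mul, mul_add, mul_one, mul_sub, hN, single_mul_single_of_ne _ i j i hij.symm]
  abel

end Ring

variable {ι K : Type*} [Fintype ι] [DecidableEq ι] [LinearOrder ι] [CommRing K]

structure IsUpperTriangularLieIdeal (L : Submodule K (Matrix ι ι K)) : Prop where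
  isUpperTriangular : ∀ x ∈ L, x.IsUpperTriangular
  lie_mem : ∀ x ∈ L, ∀ a : Matrix ι ι K, a.IsUpperTriangular → x * a - a * x ∈ L

namespace IsUpperTriangularLieIdeal

variable {L : Submodule K (Matrix ι ι K)}

theorem single_mem (hL : IsUpperTriangularLieIdeal L) {x : Matrix ι ι K} (hx : x ∈ L) {i j : ι}
    (hij : i < j) : single i j (x i j) ∈ L := by
  have hE (k : ι) : (single k k (1 : K)).IsUpperTriangular := blockTriangular_single le_rfl 1
  have h := hL.lie_mem _ (hL.lie_mem x hx _ (hE i)) _ (hE j)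
  have hji : x j i = 0 := hL.isUpperTriangular x hx hij
  have hne : j ≠ i := hij.ne'
  rw [← neg_mem_iff]
  convert h using 1
  rw [sub_mul, mul_sub, Matrix.mul_assoc x, ← Matrix.mul_assoc _ x, ← Matrix.mul_assoc _ _ x]
  simp [hne, hne.symm, hji]

theorem hadamard_mem (hL : IsUpperTriangularLieIdeal L) {x : Matrix ι ι K} (hx : x ∈ L)
    {c : Matrix ι ι K} (hc : ∀ i, c i i = 1) : c ⊙ x ∈ L := by
  rw [← sub_add_cancel (c ⊙ x) x, matrix_eq_sum_single (c ⊙ x - x)]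
  refine add_mem (Submodule.sum_mem _ fun i _ => Submodule.sum_mem _ fun j _ => ?_) hx
  rw [sub_apply, hadamard_apply, ← sub_one_mul]
  rcases lt_trichotomy i j with hij | rfl | hji
  · rw [← smul_eq_mul, ← smul_single]
    exact L.smul_mem _ (hL.single_mem hx hij)
  · simp [hc]
  · simp [hL.isUpperTriangular x hx hji]

theorem conjInvariant_diagonal (hL : IsUpperTriangularLieIdeal L) (d : ι → K) :
    ConjInvariant L (diagonal d) := by
  intro v hv x hx
  have hv' : diagonal d * v = 1 := mul_eq_one_comm.mp hv
  have hvdiag : v = diagonal fun i => v i i := by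
    ext i j
    rcases eq_or_ne i j with rfl | hij
    · simp
    · have hdv : d i * v i j = 0 := by
        simpa [diagonal_mul, one_apply_ne hij] using congrFun₂ hv' i j
      have hvd : v i i * d i = 1 := by simpa [mul_diagonal] using congrFun₂ hv i i
      calc v i j = v i i * d i * v i j := by rw [hvd, one_mul]
        _ = 0 := by rw [mul_assoc, hdv, mul_zero]
        _ = _ := (diagonal_apply_ne _ hij).symm
  have hconj : v * x * diagonal d = (of fun i j => v i i * d j) ⊙ x := by
    conv_lhs => rw [hvdiag]
    ext i j
    rw [mul_diagonal, diagonal_mul, hadamard_apply, of_apply]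
    ring
  rw [hconj]
  refine hL.hadamard_mem hx fun i => ?_
  simpa [mul_diagonal] using congrFun₂ hv i i

theorem conjInvariant_one_add_single (hL : IsUpperTriangularLieIdeal L) {i j : ι} (hij : i < j)
    (c : K) : ConjInvariant L (1 + single i j c) := by
  refine conjInvariant_one_add_of_mul_self_eq_zero (single_mul_single_of_ne c i j i hij.ne' c)
    (fun x hx => ?_) (fun x hx => hL.lie_mem x hx _ (blockTriangular_single hij.le c))
  rw [single_mul_mul_single, hL.isUpperTriangular x hx hij, mul_zero, zero_mul, single_zero]

/-- Peel off an entry `(i, j)` of the support with `j` maximal: row `j` of `N` then vanishes, so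
`1 + N` factors through the transvection `1 + N i j • E i j`. -/
theorem conjInvariant_one_add_of_support_subset (hL : IsUpperTriangularLieIdeal L)
    (S : Finset (ι × ι)) {N : Matrix ι ι K} (hN : ∀ i j, j ≤ i → N i j = 0)
    (hS : ∀ i j, N i j ≠ 0 → (i, j) ∈ S) : ConjInvariant L (1 + N) := by
  induction S using Finset.induction_on_max_value (Prod.snd : ι × ι → ι) generalizing N with
  | empty =>
    obtain rfl : N = 0 := ext fun i j => by_contra fun h => by simpa using hS i j h
    intro v hv x hx
    rw [add_zero, mul_one] at hv ⊢
    rwa [hv, one_mul]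
  | insert p S _ hmax ih =>
    obtain ⟨i, j⟩ := p
    by_cases hNij : N i j = 0
    · refine ih hN fun a b hab => (Finset.mem_insert.mp (hS a b hab)).resolve_left fun h => ?_
      obtain ⟨rfl, rfl⟩ := Prod.mk_inj.mp h
      exact hab hNij
    have hij : i < j := lt_of_not_ge fun h => hNij (hN i j h)
    have hNrow (b : ι) : N j b = 0 := by
      by_contra hjb
      rcases Finset.mem_insert.mp (hS j b hjb) with h | h
      · exact hij.ne' (Prod.mk_inj.mp h).1
      · exact hjb (hN j b (hmax _ h))
    have hN' (a b : ι) :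
        (N - single i j (N i j)) a b = if a = i ∧ b = j then 0 else N a b := by
      by_cases h : a = i ∧ b = j
      · obtain ⟨rfl, rfl⟩ := h
        simp
      · rw [sub_apply, single_apply, if_neg fun h' => h ⟨h'.1.symm, h'.2.symm⟩, if_neg h,
          sub_zero]
    rw [one_add_eq_mul_one_add_single hij.ne hNrow]
    refine (hL.conjInvariant_one_add_single hij _).mul ?_ (ih ?_ ?_)
    · exact IsNilpotent.isUnit_one_add ⟨2, by rw [sq, single_mul_single_of_ne _ i j i hij.ne']⟩
    · intro a b hab
      rw [hN']
      split_ifs <;> simp [hN a b hab]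
    · intro a b hab
      rw [hN'] at hab
      split_ifs at hab with h
      · exact absurd rfl hab
      · exact (Finset.mem_insert.mp (hS a b hab)).resolve_left fun h' =>
          h (Prod.mk_inj.mp h')

theorem conjInvariant_of_isUpperTriangular (hL : IsUpperTriangularLieIdeal L)
    {t : Matrix ι ι K} (ht : t.IsUpperTriangular) : ConjInvariant L t := by
  intro v hv
  have hdiag : ∀ i, IsUnit (t i i) := by
    simpa [det_of_isUpperTriangular ht] using isUnit_det_of_left_inverse hv
  set N := diagonal (fun i => Ring.inverse (t i i)) * t - 1 with hN
  have hfactor : t = diagonal (fun i => t i i) * (1 + N) := by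
    rw [add_sub_cancel, ← Matrix.mul_assoc, diagonal_mul_diagonal]
    simp_rw [Ring.mul_inverse_cancel _ (hdiag _), diagonal_one, one_mul]
  have hNstrict (i j : ι) (hji : j ≤ i) : N i j = 0 := by
    rcases hji.lt_or_eq with hji | rfl
    · simp [hN, diagonal_mul, ht hji, one_apply_ne hji.ne']
    · simp [hN, diagonal_mul, Ring.inverse_mul_cancel _ (hdiag j)]
  rw [hfactor] at hv ⊢
  exact (hL.conjInvariant_diagonal _).mul (isUnit_diagonal.mpr (Pi.isUnit_iff.mpr hdiag))
    (hL.conjInvariant_one_add_of_support_subset Finset.univ hNstrict fun _ _ _ =>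
      Finset.mem_univ _) v hv

end IsUpperTriangularLieIdeal

end Matrix

theorem lie_ideal_similarity_invariant_general
    {n : ℕ} (L : Submodule ℂ (Matrix (Fin n) (Fin n) ℂ))
    (hLsub : ∀ x ∈ L, ∀ i j : Fin n, j < i → x i j = 0)
    (hLie : ∀ x ∈ L, ∀ a : Matrix (Fin n) (Fin n) ℂ,
      (∀ i j : Fin n, j < i → a i j = 0) → x * a - a * x ∈ L)
    (t s : Matrix (Fin n) (Fin n) ℂ)
    (ht : ∀ i j : Fin n, j < i → t i j = 0)
    (hst : s * t = 1) :
    ∀ x ∈ L, s * x * t ∈ L := by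
  have hL : Matrix.IsUpperTriangularLieIdeal L :=
    ⟨fun x hx _ _ => hLsub x hx _ _, fun x hx a ha => hLie x hx a fun _ _ => @ha _ _⟩
  exact hL.conjInvariant_of_isUpperTriangular (fun _ _ => ht _ _) s hst

/-- Every Lie ideal `L` of the upper triangular matrix algebra `Tₙ` is
similarity invariant: if `t ∈ Tₙ` is invertible within `Tₙ` (with inverse `s ∈ Tₙ`)
and `x ∈ L`, then `t⁻¹ x t = s * x * t ∈ L`. -/
theorem lie_ideal_similarity_invariant
    {n : ℕ} (L : Submodule ℂ (Matrix (Fin n) (Fin n) ℂ))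
    (hLsub : ∀ x ∈ L, ∀ i j : Fin n, j < i → x i j = 0)
    (hLie : ∀ x ∈ L, ∀ a : Matrix (Fin n) (Fin n) ℂ,
      (∀ i j : Fin n, j < i → a i j = 0) → x * a - a * x ∈ L)
    (t s : Matrix (Fin n) (Fin n) ℂ)
    (ht : ∀ i j : Fin n, j < i → t i j = 0)
    (hs : ∀ i j : Fin n, j < i → s i j = 0)
    (hts : t * s = 1) (hst : s * t = 1) :
    ∀ x ∈ L, s * x * t ∈ L :=
  lie_ideal_similarity_invariant_general L hLsub hLie t s ht hst
end

section
/- Let L be a Lie ideal in the upper triangular matrix algebra Tₙ, let f ∈ L, and let d₁,…,dₙ be the minimal diagonal projections (diagonal matrix units). Then for each i, the element dᵢf - dᵢfdᵢ belongs to L. (Proof identity: dᵢf - dᵢfdᵢ = (1/2)([dᵢ,f] + Σ_{j≠i}[dᵢ,[f,dⱼ]]).) -/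
/-!
For an idempotent `e`, the double commutator `[[f, e], e]` exceeds `[f, e]` by exactly
`2 (e f - e f e)`. Since `dᵢ` is an upper triangular idempotent, both commutators lie in `L`,
and dividing by `2` puts `dᵢ f - dᵢ f dᵢ` in `L`.
-/

theorem IsIdempotentElem.two_smul_mul_sub_mul_mul {K A : Type*} [Semiring K] [Ring A]
    [Module K A] {e : A} (he : IsIdempotentElem e) (f : A) :
    (2 : K) • (e * f - e * f * e) =
      (f * e - e * f) * e - e * (f * e - e * f) - (f * e - e * f) := by
  have hfe : f * e * e = f * e := by rw [mul_assoc, he.eq]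
  have hef : e * (e * f) = e * f := by rw [← mul_assoc, he.eq]
  rw [two_smul, sub_mul, mul_sub, hfe, hef, mul_assoc]
  abel

theorem Matrix.isIdempotentElem_single_one {n R : Type*} [DecidableEq n] [Fintype n]
    [Semiring R] (i : n) : IsIdempotentElem (Matrix.single i i (1 : R)) := by
  simp [IsIdempotentElem, Matrix.single_mul_single_same]

theorem row_lemma_general
    {n : ℕ} (L : Submodule ℂ (Matrix (Fin n) (Fin n) ℂ))
    (hLie : ∀ x ∈ L, ∀ a : Matrix (Fin n) (Fin n) ℂ,
      (∀ i j : Fin n, j < i → a i j = 0) → x * a - a * x ∈ L)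
    (f : Matrix (Fin n) (Fin n) ℂ) (hf : f ∈ L) (i : Fin n) :
    Matrix.single i i (1 : ℂ) * f -
      Matrix.single i i (1 : ℂ) * f * Matrix.single i i (1 : ℂ) ∈ L := by
  set d := Matrix.single i i (1 : ℂ)
  have hd : ∀ a b : Fin n, b < a → d a b = 0 :=
    Matrix.blockTriangular_single (b := id) le_rfl 1
  have hc : f * d - d * f ∈ L := hLie f hf d hd
  have hcc : (f * d - d * f) * d - d * (f * d - d * f) ∈ L := hLie _ hc d hd
  rw [← L.smul_mem_iff (two_ne_zero : (2 : ℂ) ≠ 0),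
    (Matrix.isIdempotentElem_single_one i).two_smul_mul_sub_mul_mul]
  exact L.sub_mem hcc hc

/-- Let `L` be a Lie ideal in the upper triangular matrix algebra `Tₙ`,
`f ∈ L`, and let `dᵢ = eᵢᵢ` be the diagonal matrix units.  Then for each `i`,
`dᵢ f - dᵢ f dᵢ ∈ L`. -/
theorem row_lemma
    {n : ℕ} (L : Submodule ℂ (Matrix (Fin n) (Fin n) ℂ))
    (hLsub : ∀ x ∈ L, ∀ i j : Fin n, j < i → x i j = 0)
    (hLie : ∀ x ∈ L, ∀ a : Matrix (Fin n) (Fin n) ℂ,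
      (∀ i j : Fin n, j < i → a i j = 0) → x * a - a * x ∈ L)
    (f : Matrix (Fin n) (Fin n) ℂ) (hf : f ∈ L) (i : Fin n) :
    Matrix.single i i (1 : ℂ) * f -
      Matrix.single i i (1 : ℂ) * f * Matrix.single i i (1 : ℂ) ∈ L :=
  row_lemma_general L hLie f hf i
end
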